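/- arXiv:1610.09338 — 2 statements merged into one kernel-verified Lean document; each statement's English description precedes it below -/
import Mathlib

section
/- For any real α ≥ 0 and any real ν, the identity e^{−ν²} = −2α ν² M(−α/2 + 1/2, 3/2, −ν²) M(−α/2 + 1, 3/2, −ν²) + M(−α/2 + 1/2, 1/2, −ν²) M(−α/2, 1/2, −ν²) holds. -/
open Real Filter Topology

/-- The Kummer confluent hypergeometric function `M(a,b,z)`, defined by its power series. -/
noncomputable def kummerM (a b z : ℝ) : ℝ :=
  ∑' s : ℕ, ((ascPochhammer ℝ s).eval a / ((ascPochhammer ℝ s).eval b * (Nat.factorial s : ℝ)))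
      * z ^ s

/-!
Compare Taylor coefficients. Write `p k`, `q k` for the coefficients of `M(a + 1/2, 1/2, z)` and
`M(a, 1/2, z)`. The relations `(3/2)ₖ = (2k + 1) (1/2)ₖ` and `(a)ₖ₊₁ = a (a + 1)ₖ` express the
coefficients of the two `b = 3/2` functions through `p` and `q`, which turns the coefficient of
`z ^ n` of the right-hand side into `Tₙ = ∑_{i+j=n} (1 - j / (i + 1/2)) p i q j`. The first-order
recurrences of `p` and `q` make `(n + 1) Tₙ₊₁ - Tₙ` a telescoping sum, so `Tₙ = 1 / n!`, the
coefficient of `exp`.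
-/

open Finset Polynomial
open scoped Nat

noncomputable def kummerCoeff (a b : ℝ) (n : ℕ) : ℝ :=
  (ascPochhammer ℝ n).eval a / ((ascPochhammer ℝ n).eval b * n !)

theorem kummerM_eq_tsum (a b z : ℝ) : kummerM a b z = ∑' n, kummerCoeff a b n * z ^ n := rfl

@[simp]
theorem kummerCoeff_zero (a b : ℝ) : kummerCoeff a b 0 = 1 := by
  simp [kummerCoeff]

theorem kummerCoeff_succ (a b : ℝ) (n : ℕ) :
    kummerCoeff a b (n + 1) = kummerCoeff a b n * (a + n) / ((b + n) * (n + 1)) := by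
  simp only [kummerCoeff, ascPochhammer_succ_eval, Nat.factorial_succ, Nat.cast_mul,
    Nat.cast_succ, div_eq_mul_inv, mul_inv]
  ring

theorem kummerCoeff_add_one_right (a : ℝ) {b : ℝ} (hb : b ≠ 0) (n : ℕ) :
    kummerCoeff a (b + 1) n = b / (b + n) * kummerCoeff a b n := by
  have h : (ascPochhammer ℝ n).eval (b + 1) = (ascPochhammer ℝ n).eval b * (b + n) / b := by
    rw [eq_div_iff hb, ← ascPochhammer_succ_eval, ascPochhammer_succ_left]
    simp [eval_comp, mul_comm]
  simp only [kummerCoeff, h, div_eq_mul_inv, mul_inv, inv_inv]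
  ring

theorem mul_kummerCoeff_succ (a : ℝ) {b : ℝ} (hb : b ≠ 0) (n : ℕ) :
    b * (n + 1) * kummerCoeff a b (n + 1) = a * kummerCoeff (a + 1) (b + 1) n := by
  have hn : (n : ℝ) + 1 ≠ 0 := n.cast_add_one_ne_zero
  simp only [kummerCoeff, ascPochhammer_succ_left, eval_mul, eval_X, eval_comp, eval_add,
    eval_one, Nat.factorial_succ, Nat.cast_mul, Nat.cast_succ, div_eq_mul_inv, mul_inv]
  field_simp

theorem tendsto_kummerCoeff_ratio (a b : ℝ) :
    Tendsto (fun n : ℕ => (a + n) / ((b + n) * (n + 1))) atTop (𝓝 0) := by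
  have h := (tendsto_add_mul_div_add_mul_atTop_nhds a b 1 one_ne_zero).mul
    (tendsto_one_div_add_atTop_nhds_zero_nat (𝕜 := ℝ))
  rw [mul_zero] at h
  refine h.congr fun n => ?_
  simp only [one_mul, div_mul_div_comm, mul_one]

theorem summable_norm_kummerCoeff_mul_pow (a b z : ℝ) :
    Summable fun n => ‖kummerCoeff a b n * z ^ n‖ := by
  refine summable_of_ratio_norm_eventually_le (r := 1 / 2) (by norm_num) ?_
  have hsmall := ((tendsto_kummerCoeff_ratio a b).mul_const z).norm.eventually
    (eventually_le_nhds (b := 1 / 2) (by norm_num))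
  filter_upwards [hsmall] with n hn
  have hstep : kummerCoeff a b (n + 1) * z ^ (n + 1) =
      (a + n) / ((b + n) * (n + 1)) * z * (kummerCoeff a b n * z ^ n) := by
    rw [kummerCoeff_succ, pow_succ]; ring
  rw [norm_norm, norm_norm, hstep, norm_mul]
  exact mul_le_mul_of_nonneg_right hn (norm_nonneg _)

noncomputable def kummerProdCoeff (a b a' b' : ℝ) (n : ℕ) : ℝ :=
  ∑ ij ∈ antidiagonal n, kummerCoeff a b ij.1 * kummerCoeff a' b' ij.2

@[simp]
theorem kummerProdCoeff_zero (a b a' b' : ℝ) : kummerProdCoeff a b a' b' 0 = 1 := by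
  simp [kummerProdCoeff]

theorem hasSum_kummerM_mul_kummerM (a b a' b' z : ℝ) :
    HasSum (fun n => kummerProdCoeff a b a' b' n * z ^ n) (kummerM a b z * kummerM a' b' z) := by
  have hf := summable_norm_kummerCoeff_mul_pow a b z
  have hg := summable_norm_kummerCoeff_mul_pow a' b' z
  have hcauchy : (fun n => kummerProdCoeff a b a' b' n * z ^ n) = fun n =>
      ∑ ij ∈ antidiagonal n,
        kummerCoeff a b ij.1 * z ^ ij.1 * (kummerCoeff a' b' ij.2 * z ^ ij.2) := by
    funext n
    rw [kummerProdCoeff, sum_mul]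
    refine sum_congr rfl fun ij hij => ?_
    rw [← HasAntidiagonal.mem_antidiagonal.mp hij, pow_add]
    ring
  rw [hcauchy, kummerM_eq_tsum, kummerM_eq_tsum,
    tsum_mul_tsum_eq_tsum_sum_antidiagonal_of_summable_norm hf hg]
  exact (summable_norm_sum_mul_antidiagonal_of_summable_norm hf hg).of_norm.hasSum

theorem Finset.Nat.sum_antidiagonal_telescope {M : Type*} [AddCommGroup M] (h : ℕ → ℕ → M)
    (n : ℕ) :
    ∑ ij ∈ antidiagonal n, (h ij.1 (ij.2 + 1) - h (ij.1 + 1) ij.2) =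
      h 0 (n + 1) - h (n + 1) 0 := by
  have hsucc := (Nat.sum_antidiagonal_succ (n := n) (f := fun ij => h ij.1 ij.2)).symm.trans
    Nat.sum_antidiagonal_succ'
  rw [sum_sub_distrib, sub_eq_sub_iff_add_eq_add, add_comm]
  exact hsucc.symm

noncomputable def wronskianCoeff (a : ℝ) (n : ℕ) : ℝ :=
  ∑ ij ∈ antidiagonal n,
    (1 - ij.2 / (1 / 2 + ij.1)) * kummerCoeff (a + 1 / 2) (1 / 2) ij.1 * kummerCoeff a (1 / 2) ij.2

theorem wronskianCoeff_succ (a : ℝ) (n : ℕ) :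
    (n + 1) * wronskianCoeff a (n + 1) = wronskianCoeff a n := by
  set p := kummerCoeff (a + 1 / 2) (1 / 2)
  set q := kummerCoeff a (1 / 2)
  have hterm : ∀ ij ∈ antidiagonal n,
      (n + 1) * ((1 - ((ij.2 + 1 : ℕ) : ℝ) / (1 / 2 + ij.1)) * p ij.1 * q (ij.2 + 1)) =
        (1 - ij.2 / (1 / 2 + ij.1)) * p ij.1 * q ij.2 +
          (ij.1 * p ij.1 * q (ij.2 + 1) - ((ij.1 + 1 : ℕ) : ℝ) * p (ij.1 + 1) * q ij.2) := by
    rintro ⟨i, j⟩ hij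
    rw [HasAntidiagonal.mem_antidiagonal] at hij
    subst hij
    have hi : (1 / 2 + i : ℝ) ≠ 0 := by positivity
    have hj : (1 / 2 + j : ℝ) ≠ 0 := by positivity
    simp only [p, q, kummerCoeff_succ]
    push_cast
    field_simp
    ring
  have htel := Finset.Nat.sum_antidiagonal_telescope (fun i j => (i : ℝ) * p i * q j) n
  rw [wronskianCoeff, Nat.sum_antidiagonal_succ', mul_add, mul_sum, sum_congr rfl hterm,
    sum_add_distrib, htel, wronskianCoeff]
  simp only [q, kummerCoeff_zero, Nat.cast_zero, zero_div, sub_zero, zero_mul]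
  push_cast
  ring

theorem wronskianCoeff_eq (a : ℝ) (n : ℕ) : wronskianCoeff a n = (n ! : ℝ)⁻¹ := by
  induction n with
  | zero => simp [wronskianCoeff]
  | succ n ih =>
    rw [← wronskianCoeff_succ] at ih
    rw [Nat.factorial_succ]
    push_cast
    rw [mul_inv, ← ih]
    field_simp

theorem kummerProdCoeff_wronskian (a : ℝ) (n : ℕ) :
    -4 * a * kummerProdCoeff (a + 1 / 2) (3 / 2) (a + 1) (3 / 2) n
      + kummerProdCoeff (a + 1 / 2) (1 / 2) a (1 / 2) (n + 1) = wronskianCoeff a (n + 1) := by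
  have h32 : (3 / 2 : ℝ) = 1 / 2 + 1 := by norm_num
  rw [kummerProdCoeff, kummerProdCoeff, wronskianCoeff, Nat.sum_antidiagonal_succ',
    Nat.sum_antidiagonal_succ', mul_sum, add_left_comm, ← sum_add_distrib]
  simp only [CharP.cast_eq_zero, zero_div, sub_zero, one_mul]
  congr 1
  refine sum_congr rfl fun ij _ => ?_
  have hi : (1 / 2 + ij.1 : ℝ) ≠ 0 := by positivity
  have hS := mul_kummerCoeff_succ a (b := 1 / 2) (by norm_num) ij.2
  rw [h32, kummerCoeff_add_one_right _ (by norm_num)]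
  push_cast at hS ⊢
  linear_combination (2 / (1 / 2 + ij.1) * kummerCoeff (a + 1 / 2) (1 / 2) ij.1) * hS

theorem exp_eq_kummerM_wronskian (a z : ℝ) :
    exp z = -4 * a * z * kummerM (a + 1 / 2) (3 / 2) z * kummerM (a + 1) (3 / 2) z
      + kummerM (a + 1 / 2) (1 / 2) z * kummerM a (1 / 2) z := by
  have hE := hasSum_kummerM_mul_kummerM (a + 1 / 2) (3 / 2) (a + 1) (3 / 2) z
  have hF := (hasSum_nat_add_iff' 1).mpr
    (hasSum_kummerM_mul_kummerM (a + 1 / 2) (1 / 2) a (1 / 2) z)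
  have hexp := (hasSum_nat_add_iff' 1).mpr
    (exp_eq_exp_ℝ ▸ NormedSpace.expSeries_div_hasSum_exp z)
  set E := kummerProdCoeff (a + 1 / 2) (3 / 2) (a + 1) (3 / 2)
  set F := kummerProdCoeff (a + 1 / 2) (1 / 2) a (1 / 2)
  have hcoeff : ∀ n : ℕ,
      -4 * a * z * (E n * z ^ n) + F (n + 1) * z ^ (n + 1) = z ^ (n + 1) / (n + 1)! := fun n => by
    rw [div_eq_inv_mul, ← wronskianCoeff_eq, ← kummerProdCoeff_wronskian]
    ring
  have hsum := (hE.mul_left (-4 * a * z)).add hF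
  rw [funext hcoeff] at hsum
  have hvalue := hsum.unique hexp
  simp only [sum_range_one, F, kummerProdCoeff_zero, pow_zero, mul_one, Nat.factorial_zero,
    Nat.cast_one, div_one] at hvalue
  linarith

theorem kummerM_wronskian_identity_general (α : ℝ) (ν : ℝ) :
    Real.exp (-ν ^ 2)
      = -2 * α * ν ^ 2 * kummerM (-α / 2 + 1 / 2) (3 / 2) (-ν ^ 2)
            * kummerM (-α / 2 + 1) (3 / 2) (-ν ^ 2)
        + kummerM (-α / 2 + 1 / 2) (1 / 2) (-ν ^ 2) * kummerM (-α / 2) (1 / 2) (-ν ^ 2) := by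
  rw [exp_eq_kummerM_wronskian (-α / 2) (-ν ^ 2)]
  ring

/-- Wronskian-type identity used in the Stefan condition. -/
theorem kummerM_wronskian_identity (α : ℝ) (hα : 0 ≤ α) (ν : ℝ) :
    Real.exp (-ν ^ 2)
      = -2 * α * ν ^ 2 * kummerM (-α / 2 + 1 / 2) (3 / 2) (-ν ^ 2)
            * kummerM (-α / 2 + 1) (3 / 2) (-ν ^ 2)
        + kummerM (-α / 2 + 1 / 2) (1 / 2) (-ν ^ 2) * kummerM (-α / 2) (1 / 2) (-ν ^ 2) :=
  kummerM_wronskian_identity_general α ν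
end

section
/- Fix α ≥ 0, d > 0, k > 0, γ > 0, T_∞ > 0. For each h₀ > 0 let ν_{h₀} be the unique positive solution of h₀T_∞/(γ2^α d^{(α+1)/2}) = x^{α+1}[M(α/2+1/2,1/2,x²) + 2(√d h₀/k) x M(α/2+1,3/2,x²)], and let ν_∞ be the unique positive solution of kT_∞/(2^{α+1} d^{α/2+1} γ) = x^{α+2} M(α/2+1,3/2,x²). Then ν_{h₀} → ν_∞ as h₀ → +∞. -/
open Real Filter Topology

/-!
Multiplying the `h₀`-equation by `k / (2 √d h₀)` turns it into `F ν∞ = ε G ν + F ν` with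
`ε = k / (2 √d h₀)`, where `F x = x^(α+2) M(α/2+1, 3/2, x²)` is the right-hand side of the limit
equation and `G x = x^(α+1) M(α/2+1/2, 1/2, x²)`. The Kummer series has positive coefficients, so
`F` and `G` increase on `[0, ∞)`, `F` strictly. As `ε G ν ≥ 0`, this forces `ν ≤ ν∞`, hence
`0 ≤ ε G ν ≤ ε G ν∞ → 0`; so `F ν → F ν∞`, and strict monotonicity of `F` gives `ν → ν∞`.
-/

open Set

noncomputable def kummerTerm (a b z : ℝ) (s : ℕ) : ℝ :=
  (ascPochhammer ℝ s).eval a / ((ascPochhammer ℝ s).eval b * (s.factorial : ℝ)) * z ^ s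

lemma ascPochhammer_eval_le_pow_mul {a b c : ℝ} (ha : 0 < a) (hb : 0 < b) (hc : 1 ≤ c)
    (hab : a ≤ c * b) (n : ℕ) :
    (ascPochhammer ℝ n).eval a ≤ c ^ n * (ascPochhammer ℝ n).eval b := by
  induction n with
  | zero => simp
  | succ n ih =>
    rw [ascPochhammer_succ_eval, ascPochhammer_succ_eval, pow_succ, mul_mul_mul_comm]
    have hn : (0 : ℝ) ≤ n := n.cast_nonneg
    exact mul_le_mul ih (by nlinarith) (by linarith)
      (mul_nonneg (pow_nonneg (by linarith) n) (ascPochhammer_pos n b hb).le)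

section Kummer

variable {a b z : ℝ}

lemma kummerTerm_nonneg (ha : 0 < a) (hb : 0 < b) (hz : 0 ≤ z) (s : ℕ) :
    0 ≤ kummerTerm a b z s := by
  have := ascPochhammer_pos s a ha
  have := ascPochhammer_pos s b hb
  unfold kummerTerm
  positivity

lemma summable_kummerTerm (ha : 0 < a) (hb : 0 < b) (hz : 0 ≤ z) :
    Summable (kummerTerm a b z) := by
  set c := max (a / b) 1
  have hab : a ≤ c * b := (div_le_iff₀ hb).1 (le_max_left _ _)
  refine (summable_pow_div_factorial (c * z)).of_nonneg_of_le (kummerTerm_nonneg ha hb hz)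
    fun s => ?_
  have hPb := ascPochhammer_pos s b hb
  have hP := ascPochhammer_eval_le_pow_mul ha hb (le_max_right _ _) hab s
  calc kummerTerm a b z s
      = (ascPochhammer ℝ s).eval a / (ascPochhammer ℝ s).eval b * z ^ s / s.factorial := by
        unfold kummerTerm; ring
    _ ≤ c ^ s * z ^ s / s.factorial := by gcongr; rwa [div_le_iff₀ hPb]
    _ = (c * z) ^ s / s.factorial := by rw [mul_pow]

lemma one_le_kummerM (ha : 0 < a) (hb : 0 < b) (hz : 0 ≤ z) : 1 ≤ kummerM a b z :=
  calc 1 = kummerTerm a b z 0 := by simp [kummerTerm]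
    _ ≤ kummerM a b z :=
      (summable_kummerTerm ha hb hz).le_tsum 0 fun s _ => kummerTerm_nonneg ha hb hz s

lemma kummerM_monotoneOn (ha : 0 < a) (hb : 0 < b) : MonotoneOn (kummerM a b) (Ici 0) := by
  intro z hz z' hz' hzz'
  refine (summable_kummerTerm ha hb hz).tsum_le_tsum (fun s => ?_) (summable_kummerTerm ha hb hz')
  have := ascPochhammer_pos s a ha
  have := ascPochhammer_pos s b hb
  gcongr

lemma strictMonoOn_rpow_mul_kummerM_sq {p : ℝ} (hp : 0 < p) (ha : 0 < a) (hb : 0 < b) :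
    StrictMonoOn (fun x : ℝ => x ^ p * kummerM a b (x ^ 2)) (Ici 0) := by
  intro x (hx : 0 ≤ x) y (hy : 0 ≤ y) hxy
  have hM : 0 < kummerM a b (x ^ 2) := one_pos.trans_le (one_le_kummerM ha hb (sq_nonneg x))
  calc x ^ p * kummerM a b (x ^ 2) < y ^ p * kummerM a b (x ^ 2) := by
        gcongr
    _ ≤ y ^ p * kummerM a b (y ^ 2) := by
        gcongr
        exact kummerM_monotoneOn ha hb (sq_nonneg x) (sq_nonneg y) (by gcongr)

end Kummer

theorem tendsto_of_strictMonoOn_of_tendsto_comp {ι α β : Type*} [LinearOrder α]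
    [TopologicalSpace α] [OrderTopology α] [LinearOrder β] [TopologicalSpace β] [OrderTopology β]
    {l : Filter ι} {F : α → β} {ν : ι → α} {b x₀ : α} (hF : StrictMonoOn F (Ici b))
    (hν : ∀ᶠ i in l, ν i ∈ Icc b x₀) (hlim : Tendsto (F ∘ ν) l (𝓝 (F x₀))) :
    Tendsto ν l (𝓝 x₀) := by
  refine tendsto_order.2 ⟨fun a ha => ?_, fun a ha => hν.mono fun i hi => hi.2.trans_lt ha⟩
  rcases lt_or_ge a b with hab | hab
  · exact hν.mono fun i hi => hab.trans_le hi.1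
  · filter_upwards [(tendsto_order.1 hlim).1 (F a) (hF hab (hab.trans ha.le) ha), hν]
      with i hFi hi
    exact (hF.lt_iff_lt hab hi.1).1 hFi

theorem tendsto_of_eq_mul_add {ι : Type*} {l : Filter ι} {F G : ℝ → ℝ} {ν ε : ι → ℝ} {x₀ : ℝ}
    (hF : StrictMonoOn F (Ici 0)) (hG : MonotoneOn G (Ici 0)) (hG₀ : 0 ≤ G 0)
    (hε : Tendsto ε l (𝓝 0)) (hx₀ : 0 ≤ x₀)
    (heq : ∀ᶠ i in l, 0 ≤ ν i ∧ 0 ≤ ε i ∧ F x₀ = ε i * G (ν i) + F (ν i)) :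
    Tendsto ν l (𝓝 x₀) := by
  have hGν : ∀ᶠ i in l, 0 ≤ ε i * G (ν i) := heq.mono fun i ⟨hν, hεi, _⟩ =>
    mul_nonneg hεi (hG₀.trans (hG self_mem_Ici hν hν))
  have hbelow : ∀ᶠ i in l, ν i ∈ Icc 0 x₀ := (heq.and hGν).mono fun i ⟨⟨hν, _, hi⟩, hpos⟩ =>
    ⟨hν, (hF.le_iff_le hν hx₀).1 (by linarith)⟩
  have hsmall : Tendsto (fun i => ε i * G (ν i)) l (𝓝 0) := by
    refine squeeze_zero' hGν ?_ (by simpa using hε.mul_const (G x₀))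
    filter_upwards [heq, hbelow] with i ⟨_, hεi, _⟩ hi
    exact mul_le_mul_of_nonneg_left (hG hi.1 hx₀ hi.2) hεi
  refine tendsto_of_strictMonoOn_of_tendsto_comp hF hbelow ?_
  refine (by simpa using tendsto_const_nhds.sub hsmall : Tendsto _ l (𝓝 (F x₀))).congr' ?_
  filter_upwards [heq] with i ⟨_, _, hi⟩
  simp only [Function.comp_apply]
  linarith

lemma limit_lhs_eq_perturbed {α d k γ T h ν A B : ℝ} (hd : 0 < d) (hk : k ≠ 0) (hh : h ≠ 0)
    (hν : ν ≠ 0)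
    (E : h * T / (γ * 2 ^ α * d ^ ((α + 1) / 2)) = ν ^ (α + 1) * (A + 2 * (√d * h / k) * ν * B)) :
    k * T / (2 ^ (α + 1) * d ^ (α / 2 + 1) * γ)
      = k / (2 * √d * h) * (ν ^ (α + 1) * A) + ν ^ (α + 2) * B := by
  have hs : 0 < √d := sqrt_pos.2 hd
  have h2 : (2 : ℝ) ^ (α + 1) = 2 * 2 ^ α := by rw [rpow_add_one two_ne_zero, mul_comm]
  have hdpow : d ^ (α / 2 + 1) = √d * d ^ ((α + 1) / 2) := by
    rw [sqrt_eq_rpow, ← rpow_add hd]; ring_nf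
  have hνpow : ν ^ (α + 2) = ν ^ (α + 1) * ν := by
    rw [← rpow_add_one hν]; ring_nf
  calc k * T / (2 ^ (α + 1) * d ^ (α / 2 + 1) * γ)
      = k / (2 * √d * h) * (h * T / (γ * 2 ^ α * d ^ ((α + 1) / 2))) := by
        rw [h2, hdpow]; field_simp
    _ = k / (2 * √d * h) * (ν ^ (α + 1) * A) + ν ^ (α + 2) * B := by
        rw [E, hνpow]; field_simp

theorem nu_tendsto_nu_infty_general (α d k γ Tinf : ℝ)
    (hα : 0 ≤ α) (hd : 0 < d) (hk : 0 < k)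
    (νf : ℝ → ℝ)
    (hνf : ∀ h₀ : ℝ, 0 < h₀ → 0 < νf h₀ ∧
      h₀ * Tinf / (γ * 2 ^ α * d ^ ((α + 1) / 2))
        = (νf h₀) ^ (α + 1) * (kummerM (α / 2 + 1 / 2) (1 / 2) ((νf h₀) ^ 2)
            + 2 * (Real.sqrt d * h₀ / k) * νf h₀ * kummerM (α / 2 + 1) (3 / 2) ((νf h₀) ^ 2)))
    (νinf : ℝ) (hνinf : 0 < νinf)
    (hνinfeq : k * Tinf / (2 ^ (α + 1) * d ^ (α / 2 + 1) * γ)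
      = νinf ^ (α + 2) * kummerM (α / 2 + 1) (3 / 2) (νinf ^ 2)) :
    Filter.Tendsto νf Filter.atTop (nhds νinf) := by
  have hF := strictMonoOn_rpow_mul_kummerM_sq (p := α + 2) (a := α / 2 + 1) (b := 3 / 2)
    (by linarith) (by linarith) (by norm_num)
  have hG := strictMonoOn_rpow_mul_kummerM_sq (p := α + 1) (a := α / 2 + 1 / 2) (b := 1 / 2)
    (by linarith) (by linarith) (by norm_num)
  have hG₀ : 0 ≤ (0 : ℝ) ^ (α + 1) * kummerM (α / 2 + 1 / 2) (1 / 2) (0 ^ 2) :=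
    mul_nonneg (rpow_nonneg le_rfl _) (zero_le_one.trans (one_le_kummerM (by linarith)
      (by norm_num) (sq_nonneg 0)))
  have hε : Tendsto (fun h₀ => k / (2 * √d * h₀)) atTop (𝓝 0) :=
    tendsto_const_nhds.div_atTop (tendsto_id.const_mul_atTop (by positivity))
  refine tendsto_of_eq_mul_add hF hG.monotoneOn hG₀ hε hνinf.le ?_
  filter_upwards [eventually_gt_atTop 0] with h₀ hh₀
  obtain ⟨hν, E⟩ := hνf h₀ hh₀
  exact ⟨hν.le, by positivity, hνinfeq.symm.trans
    (limit_lhs_eq_perturbed hd hk.ne' hh₀.ne' hν.ne' E)⟩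

/-- convergence of the free-boundary coefficient as `h₀ → inf`. -/
theorem nu_tendsto_nu_infty (α d k γ Tinf : ℝ)
    (hα : 0 ≤ α) (hd : 0 < d) (hk : 0 < k) (hγ : 0 < γ) (hT : 0 < Tinf)
    (νf : ℝ → ℝ)
    (hνf : ∀ h₀ : ℝ, 0 < h₀ → 0 < νf h₀ ∧
      h₀ * Tinf / (γ * 2 ^ α * d ^ ((α + 1) / 2))
        = (νf h₀) ^ (α + 1) * (kummerM (α / 2 + 1 / 2) (1 / 2) ((νf h₀) ^ 2)
            + 2 * (Real.sqrt d * h₀ / k) * νf h₀ * kummerM (α / 2 + 1) (3 / 2) ((νf h₀) ^ 2)))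
    (νinf : ℝ) (hνinf : 0 < νinf)
    (hνinfeq : k * Tinf / (2 ^ (α + 1) * d ^ (α / 2 + 1) * γ)
      = νinf ^ (α + 2) * kummerM (α / 2 + 1) (3 / 2) (νinf ^ 2)) :
    Filter.Tendsto νf Filter.atTop (nhds νinf) :=
  nu_tendsto_nu_infty_general α d k γ Tinf hα hd hk νf hνf νinf hνinf hνinfeq
end
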